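/- Let n ≥ 2 and let K be the Cauchy–Szegő kernel on the quaternionic Heisenberg group 𝓗^{n−1}. Then there exists a constant C > 0 (depending only on n) such that for every g = (t,y) ∈ 𝓗^{n−1} with g ≠ 0, |K(g)| ≤ C·(|y|⁴ + |t|²)^{−(2n+1)/2}; that is, |K(g)| ≤ C·‖g‖^{−Q} with Q = 4n+2, where ‖(t,y)‖ = (|y|⁴ + |t|²)^{1/4} and |K(g)| is the quaternion norm. -/

import Mathlib

open Quaternion
noncomputable section

/-- An element of the quaternionic Heisenberg group `𝓗^m = Im ℍ × ℍ^m`,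
modelled as a pair `(t, y)` with `t : ℍ` (required to be purely imaginary via
the hypothesis `t.re = 0` in the theorems below) and `y : Fin m → ℍ`. -/
abbrev QH (m : ℕ) := ℍ[ℝ] × (Fin m → ℍ[ℝ])

/-- The group product `(t,y)·(t',y') = (t + t' + 2 Im⟨y,y'⟩, y + y')`, where
`⟨y,y'⟩ = Σ_l conj(y_l)·y'_l`. -/
def qmul {m : ℕ} (g h : QH m) : QH m :=
  (g.1 + h.1 + 2 * (∑ l, star (g.2 l) * h.2 l).im, g.2 + h.2)

/-- The group inverse `(t,y)⁻¹ = (−t,−y)`. -/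
def qinv {m : ℕ} (g : QH m) : QH m := (-g.1, -g.2)

/-- The homogeneous norm `‖(t,y)‖ = (|y|⁴ + |t|²)^{1/4}`. -/
def hnorm {m : ℕ} (g : QH m) : ℝ :=
  ((∑ l, ‖g.2 l‖ ^ 2) ^ 2 + ‖g.1‖ ^ 2) ^ ((1 : ℝ) / 4)

/-- The quasi-distance `ρ(h,g) = ‖g⁻¹·h‖`. -/
def qdist {m : ℕ} (h g : QH m) : ℝ := hnorm (qmul (qinv g) h)

/-- The dilation `δ_r(t,y) = (r²t, ry)`. -/
def qdil {m : ℕ} (r : ℝ) (g : QH m) : QH m := ((r ^ 2 : ℝ) • g.1, r • g.2)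

/-- The normalized Cauchy–Szegő kernel density: `s(σ)` is the `(2n−2)`-nd
derivative at `x = Re σ` of `x ↦ conj(x + Im σ)·(x² + |Im σ|²)^{−2}`
(i.e. `∂^{2(n−1)}/∂x₁^{2(n−1)}[conj σ/|σ|⁴]` with `c_{n−1} = 1`). -/
def sker (n : ℕ) (σ : ℍ[ℝ]) : ℍ[ℝ] :=
  iteratedDeriv (2 * n - 2)
    (fun x : ℝ => ((x ^ 2 + ‖σ.im‖ ^ 2) ^ 2)⁻¹ • star ((x : ℍ[ℝ]) + σ.im)) σ.re

/-- The Cauchy–Szegő kernel `K(t,y) = s(|y|² + t)` on `𝓗^m`. -/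
def Kker (n : ℕ) {m : ℕ} (g : QH m) : ℍ[ℝ] :=
  sker n (((∑ l, ‖g.2 l‖ ^ 2 : ℝ) : ℍ[ℝ]) + g.1)

/-!
For purely imaginary `t`, `K(t, y)` is the `(2n-2)`-nd derivative at `x = |y|²` of
`x ↦ (x² + |t|²)⁻² (x - t)`. The real-linear map `ℂ → ℍ` with `1 ↦ 1`, `i ↦ t / |t|` carries
`(x² + a²)⁻² (x - ia) = (x - ia)⁻¹ (x + ia)⁻²` (with `a = |t|`) to this function and has norm at
most `2`, so it suffices to bound derivatives of the complex product. By the Leibniz rule and the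
explicit derivatives of `(x - w)ᵏ`, its `m`-th derivative is `O(R^(-m-3))`, where
`R = |x ± ia| = (x² + |t|²)^(1/2)`; for `m = 2n - 2` this is the claimed `‖g‖^(-Q)`.
-/

open Complex Finset

theorem iteratedDeriv_ofReal_sub_zpow (w : ℂ) (k : ℤ) (m : ℕ) {x : ℝ} (hx : (x : ℂ) ≠ w) :
    iteratedDeriv m (fun y : ℝ => ((y : ℂ) - w) ^ k) x =
      (∏ i ∈ range m, ((k : ℂ) - i)) * ((x : ℂ) - w) ^ (k - m) := by
  induction m generalizing x with
  | zero => simp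
  | succ m ih =>
    have hopen : IsOpen {y : ℝ | (y : ℂ) ≠ w} := isOpen_ne.preimage continuous_ofReal
    rw [iteratedDeriv_succ,
      (Filter.eventuallyEq_of_mem (hopen.mem_nhds hx) fun y hy => ih hy).deriv_eq]
    have hd := ((hasDerivAt_zpow (k - m) _ (Or.inl (sub_ne_zero.2 hx))).comp_sub_const
      (x : ℂ) w).comp_ofReal.const_mul (∏ i ∈ range m, ((k : ℂ) - i))
    rw [hd.deriv, prod_range_succ, show k - m - 1 = k - ↑(m + 1) by push_cast; ring]
    push_cast
    ring

theorem contDiffAt_ofReal_sub_zpow (w : ℂ) (k : ℤ) {x : ℝ} (hx : (x : ℂ) ≠ w) (m : ℕ) :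
    ContDiffAt ℝ m (fun y : ℝ => ((y : ℂ) - w) ^ k) x :=
  ((ofRealCLM.analyticAt x).sub analyticAt_const |>.zpow (sub_ne_zero.2 hx)).contDiffAt

theorem norm_iteratedDeriv_ofReal_sub_zpow_mul_le (k₁ k₂ : ℤ) (m : ℕ) :
    ∃ C : ℝ, ∀ (w₁ w₂ : ℂ) (x R : ℝ), 0 < R → ‖(x : ℂ) - w₁‖ = R → ‖(x : ℂ) - w₂‖ = R →
      ‖iteratedDeriv m (fun y : ℝ => ((y : ℂ) - w₁) ^ k₁ * ((y : ℂ) - w₂) ^ k₂) x‖ ≤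
        C * R ^ (k₁ + k₂ - m) := by
  refine ⟨∑ i ∈ range (m + 1), (m.choose i : ℝ) * ‖∏ j ∈ range i, ((k₁ : ℂ) - j)‖ *
    ‖∏ j ∈ range (m - i), ((k₂ : ℂ) - j)‖, fun w₁ w₂ x R hR h₁ h₂ => ?_⟩
  have hx₁ : (x : ℂ) ≠ w₁ := fun h => by simp [h, hR.ne] at h₁
  have hx₂ : (x : ℂ) ≠ w₂ := fun h => by simp [h, hR.ne] at h₂
  set s : Set ℝ := {y | (y : ℂ) ≠ w₁ ∧ (y : ℂ) ≠ w₂}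
  have hs : IsOpen s :=
    (isOpen_ne.preimage continuous_ofReal).inter (isOpen_ne.preimage continuous_ofReal)
  have hxs : x ∈ s := ⟨hx₁, hx₂⟩
  have hnorm (j : ℕ) (f : ℝ → ℂ) :
      ‖iteratedFDerivWithin ℝ j f s x‖ = ‖iteratedDeriv j f x‖ := by
    rw [iteratedFDerivWithin_of_isOpen j hs hxs, norm_iteratedFDeriv_eq_norm_iteratedDeriv]
  have hcd (w : ℂ) (k : ℤ) (hw : ∀ y ∈ s, (y : ℂ) ≠ w) :
      ContDiffOn ℝ m (fun y : ℝ => ((y : ℂ) - w) ^ k) s := fun y hy =>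
    (contDiffAt_ofReal_sub_zpow w k (hw y hy) m).contDiffWithinAt
  have hterm (w : ℂ) (k : ℤ) (j : ℕ) (hw : ‖(x : ℂ) - w‖ = R) (hxw : (x : ℂ) ≠ w) :
      ‖iteratedFDerivWithin ℝ j (fun y : ℝ => ((y : ℂ) - w) ^ k) s x‖ =
        ‖∏ i ∈ range j, ((k : ℂ) - i)‖ * R ^ (k - j) := by
    rw [hnorm, iteratedDeriv_ofReal_sub_zpow w k j hxw, norm_mul, norm_zpow, hw]
  rw [← hnorm, sum_mul]
  refine (norm_iteratedFDerivWithin_mul_le (hcd w₁ k₁ fun y hy => hy.1)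
    (hcd w₂ k₂ fun y hy => hy.2) hs.uniqueDiffOn hxs le_rfl).trans_eq
    (sum_congr rfl fun i hi => ?_)
  have him : i ≤ m := Nat.lt_succ_iff.1 (mem_range.1 hi)
  rw [hterm w₁ k₁ i h₁ hx₁, hterm w₂ k₂ (m - i) h₂ hx₂,
    show k₁ + k₂ - m = (k₁ - i) + (k₂ - ↑(m - i)) by push_cast [him]; ring, zpow_add₀ hR.ne']
  ring

theorem inv_sq_smul_ofReal_sub_mul_I_eq_zpow_mul_zpow (a y : ℝ) :
    ((y ^ 2 + a ^ 2) ^ 2)⁻¹ • ((y : ℂ) - a * I) =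
      ((y : ℂ) - a * I) ^ (-1 : ℤ) * ((y : ℂ) - -(a * I)) ^ (-2 : ℤ) := by
  have hprod : (((y ^ 2 + a ^ 2 : ℝ)) : ℂ) = ((y : ℂ) - a * I) * ((y : ℂ) - -(a * I)) := by
    push_cast; ring_nf; rw [I_sq]; ring
  rw [real_smul, ofReal_inv, ofReal_pow, hprod]
  rcases eq_or_ne ((y : ℂ) - a * I) 0 with h | h
  · simp [h]
  · simp only [zpow_neg, zpow_ofNat, mul_pow, mul_inv]
    field_simp

theorem norm_iteratedDeriv_inv_sq_smul_ofReal_sub_mul_I_le (m : ℕ) :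
    ∃ C : ℝ, ∀ a x : ℝ, x ^ 2 + a ^ 2 ≠ 0 →
      ‖iteratedDeriv m (fun y : ℝ => ((y ^ 2 + a ^ 2) ^ 2)⁻¹ • ((y : ℂ) - a * I)) x‖ ≤
        C * (x ^ 2 + a ^ 2) ^ (-((m : ℝ) + 3) / 2) := by
  obtain ⟨C, hC⟩ := norm_iteratedDeriv_ofReal_sub_zpow_mul_le (-1) (-2) m
  refine ⟨C, fun a x hD => ?_⟩
  have hD' : 0 < x ^ 2 + a ^ 2 := lt_of_le_of_ne (by positivity) hD.symm
  have hR : √(x ^ 2 + a ^ 2) ^ (-1 + -2 - m : ℤ) = (x ^ 2 + a ^ 2) ^ (-((m : ℝ) + 3) / 2) := by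
    rw [Real.sqrt_eq_rpow, ← Real.rpow_intCast, ← Real.rpow_mul hD'.le]
    push_cast; ring_nf
  simp_rw [inv_sq_smul_ofReal_sub_mul_I_eq_zpow_mul_zpow, ← hR]
  refine hC _ _ x _ (Real.sqrt_pos.2 hD') ?_ ?_
  · rw [sub_eq_add_neg, ← neg_mul, ← ofReal_neg, norm_add_mul_I, neg_sq]
  · rw [sub_neg_eq_add, norm_add_mul_I]

theorem exists_clm_complex_quaternion_sub (c : ℍ[ℝ]) :
    ∃ φ : ℂ →L[ℝ] ℍ[ℝ], ‖φ‖ ≤ 2 ∧ ∀ x : ℝ, φ ((x : ℂ) - ‖c‖ * I) = (x : ℍ[ℝ]) - c := by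
  have hu : ‖‖c‖⁻¹ • c‖ ≤ 1 := by
    rw [norm_smul, Real.norm_eq_abs, abs_inv, abs_norm]
    exact inv_mul_le_one
  have hc : ‖c‖ • ‖c‖⁻¹ • c = c := by
    rcases eq_or_ne c 0 with h | h
    · simp [h]
    · rw [smul_smul, mul_inv_cancel₀ (norm_ne_zero_iff.2 h), one_smul]
  refine ⟨reCLM.smulRight (1 : ℍ[ℝ]) + imCLM.smulRight (‖c‖⁻¹ • c), ?_, fun x => ?_⟩
  · calc _ ≤ ‖reCLM.smulRight (1 : ℍ[ℝ])‖ + ‖imCLM.smulRight (‖c‖⁻¹ • c)‖ :=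
          ContinuousLinearMap.opNorm_add_le _ _
      _ ≤ 1 * 1 + 1 * 1 := by
        rw [ContinuousLinearMap.norm_smulRight_apply, ContinuousLinearMap.norm_smulRight_apply,
          reCLM_norm, imCLM_norm, norm_one]
        gcongr
      _ = 2 := by norm_num
  · ext <;> simp [hc, sub_eq_add_neg]

theorem norm_iteratedDeriv_inv_sq_smul_ofReal_sub_le (m : ℕ) :
    ∃ C : ℝ, 0 < C ∧ ∀ (c : ℍ[ℝ]) (x : ℝ), x ^ 2 + ‖c‖ ^ 2 ≠ 0 →
      ‖iteratedDeriv m (fun y : ℝ => ((y ^ 2 + ‖c‖ ^ 2) ^ 2)⁻¹ • ((y : ℍ[ℝ]) - c)) x‖ ≤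
        C * (x ^ 2 + ‖c‖ ^ 2) ^ (-((m : ℝ) + 3) / 2) := by
  obtain ⟨C, hC⟩ := norm_iteratedDeriv_inv_sq_smul_ofReal_sub_mul_I_le m
  refine ⟨2 * max C 1, by positivity, fun c x hD => ?_⟩
  obtain ⟨φ, hφ, hφc⟩ := exists_clm_complex_quaternion_sub c
  have hcomp : (fun y : ℝ => ((y ^ 2 + ‖c‖ ^ 2) ^ 2)⁻¹ • ((y : ℍ[ℝ]) - c)) =
      φ ∘ fun y : ℝ => ((y ^ 2 + ‖c‖ ^ 2) ^ 2)⁻¹ • ((y : ℂ) - ‖c‖ * I) := by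
    ext1 y
    rw [Function.comp_apply, map_smul, hφc]
  have hsmooth : ContDiffAt ℝ m
      (fun y : ℝ => ((y ^ 2 + ‖c‖ ^ 2) ^ 2)⁻¹ • ((y : ℂ) - ‖c‖ * I)) x :=
    (ContDiffAt.inv (f := fun y : ℝ => (y ^ 2 + ‖c‖ ^ 2) ^ 2) (by fun_prop)
      (pow_ne_zero 2 hD)).smul (ofRealCLM.contDiff.sub contDiff_const).contDiffAt
  rw [hcomp, ← norm_iteratedFDeriv_eq_norm_iteratedDeriv]
  calc _ ≤ ‖φ‖ * ‖iteratedFDeriv ℝ m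
          (fun y : ℝ => ((y ^ 2 + ‖c‖ ^ 2) ^ 2)⁻¹ • ((y : ℂ) - ‖c‖ * I)) x‖ :=
        φ.norm_iteratedFDeriv_comp_left hsmooth le_rfl
    _ ≤ 2 * (max C 1 * (x ^ 2 + ‖c‖ ^ 2) ^ (-((m : ℝ) + 3) / 2)) := by
        rw [norm_iteratedFDeriv_eq_norm_iteratedDeriv]
        gcongr
        exact (hC ‖c‖ x hD).trans (by gcongr; exact le_max_left C 1)
    _ = _ := by ring

theorem sker_ofReal_add (n : ℕ) (s : ℝ) {c : ℍ[ℝ]} (hc : c.re = 0) :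
    sker n ((s : ℍ[ℝ]) + c) = iteratedDeriv (2 * n - 2)
      (fun x : ℝ => ((x ^ 2 + ‖c‖ ^ 2) ^ 2)⁻¹ • ((x : ℍ[ℝ]) - c)) s := by
  have him : c.im = c := by ext <;> simp [hc]
  simp only [sker, Quaternion.im_add, Quaternion.im_coe, zero_add, him, Quaternion.re_add,
    Quaternion.re_coe, hc, add_zero, star_add, Quaternion.star_coe, Quaternion.star_eq_neg.2 hc,
    sub_eq_add_neg]

theorem QH.sq_sum_norm_sq_add_norm_sq_pos {m : ℕ} {g : QH m} (hg : g ≠ 0) :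
    0 < (∑ l, ‖g.2 l‖ ^ 2) ^ 2 + ‖g.1‖ ^ 2 := by
  refine lt_of_le_of_ne (by positivity) fun h => hg ?_
  obtain ⟨hy, ht⟩ := (add_eq_zero_iff_of_nonneg (sq_nonneg _) (sq_nonneg _)).1 h.symm
  have hyl := (sum_eq_zero_iff_of_nonneg fun l _ => sq_nonneg ‖g.2 l‖).1
    ((pow_eq_zero_iff two_ne_zero).1 hy)
  exact Prod.ext (by simpa using ht) (funext fun l => by simpa using hyl l (mem_univ l))

theorem Kker_size_estimate (n : ℕ) (hn : 2 ≤ n) :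
    ∃ C : ℝ, 0 < C ∧ ∀ g : QH (n - 1), g.1.re = 0 → g ≠ 0 →
      ‖Kker n g‖ ≤
        C * (((∑ l, ‖g.2 l‖ ^ 2) ^ 2 + ‖g.1‖ ^ 2) ^ (-((2 * (n : ℝ) + 1) / 2))) := by
  obtain ⟨C, hC, hbound⟩ := norm_iteratedDeriv_inv_sq_smul_ofReal_sub_le (2 * n - 2)
  refine ⟨C, hC, fun g hre hg => ?_⟩
  have hexp : -(((2 * n - 2 : ℕ) : ℝ) + 3) / 2 = -((2 * (n : ℝ) + 1) / 2) := by
    rw [Nat.cast_sub (by omega)]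
    push_cast
    ring
  rw [Kker, sker_ofReal_add n _ hre, ← hexp]
  exact hbound g.1 _ (QH.sq_sum_norm_sq_add_norm_sq_pos hg).ne'
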